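/- Suppose there exists an infeasible scenario of the interval transportation problem, i.e., sum_i s̲_i < sum_j d̄_j. Let (C̄, s, d) be a feasible supply-quasi-extreme scenario with free index k satisfying s̲_k > sum_j d_j - sum_{i != k} s_i. Then there exists a balanced feasible quasi-extreme scenario (C̄, s', d'), with sum_i s'_i = sum_j d'_j, such that f(C̄, s, d) <= f(C̄, s', d'). -/

import Mathlib

open Finset

/-- A feasible transportation plan for supplies `s` and demands `d`. -/
def IsPlan {m n : ℕ} (s : Fin m → ℝ) (d : Fin n → ℝ) (x : Fin m → Fin n → ℝ) : Prop :=
  (∀ i j, 0 ≤ x i j) ∧ (∀ i, ∑ j, x i j ≤ s i) ∧ (∀ j, ∑ i, x i j = d j)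

/-- Total transportation cost of a plan `x` under cost matrix `C`. -/
def cost {m n : ℕ} (C x : Fin m → Fin n → ℝ) : ℝ :=
  ∑ i, ∑ j, C i j * x i j

/-- Optimal value of the transportation problem with data `(C, s, d)`. -/
noncomputable def optVal {m n : ℕ} (C : Fin m → Fin n → ℝ) (s : Fin m → ℝ)
    (d : Fin n → ℝ) : ℝ :=
  sInf (cost C '' {x | IsPlan s d x})

/-- A supply-demand vector is quasi-extreme if all its coordinates except at most
one (a supply coordinate, or a demand coordinate) lie at the interval endpoints. -/
def QuasiExtreme {m n : ℕ} (sl su s : Fin m → ℝ) (dl du : Fin n → ℝ)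
    (d : Fin n → ℝ) : Prop :=
  (∃ k : Fin m, (∀ i, i ≠ k → s i = sl i ∨ s i = su i) ∧
      (∀ j, d j = dl j ∨ d j = du j)) ∨
  (∃ k : Fin n, (∀ j, j ≠ k → d j = dl j ∨ d j = du j) ∧
      (∀ i, s i = sl i ∨ s i = su i))

/-!
Lowering supplies and raising demands can only increase the optimal cost as long as the new
scenario stays feasible: scaling column `j` of any plan for the new data by `d j / d' j` gives a
plan for the old data of no larger cost. If `∑ d ≤ ∑ s̲`, put every supply at its lower bound and
raise the demands towards `d̄` until they total `∑ s̲ < ∑ d̄`. Otherwise put `s_k` at `s̲_k`,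
which keeps the scenario feasible by the hypothesis on `s̲_k` and makes the supplies extreme,
then lower them towards `s̲` until they total `∑ d`. Moving coordinates to their target endpoint
one at a time, and stopping partway at the coordinate where the target total is reached, leaves
all coordinates but one at an endpoint.
-/

lemma exists_sum_eq_of_le_of_le {ι : Type*} [DecidableEq ι] [Nonempty ι] (l v : ι → ℝ)
    (A : Finset ι) (hlv : ∀ i ∈ A, l i ≤ v i) (T : ℝ) (hlT : ∑ i ∈ A, l i ≤ T)
    (hTv : T ≤ ∑ i ∈ A, v i) :
    ∃ (w : ι → ℝ) (k : ι), (∀ i ∈ A, l i ≤ w i ∧ w i ≤ v i) ∧ ∑ i ∈ A, w i = T ∧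
      ∀ i ∈ A, i ≠ k → w i = l i ∨ w i = v i := by
  induction A using Finset.induction_on generalizing T with
  | empty => exact ⟨l, Classical.arbitrary ι, by simp, by simp_all; linarith, by simp⟩
  | @insert a B ha ih =>
    rw [sum_insert ha] at hlT hTv
    have hne : ∀ i ∈ B, i ≠ a := fun i hi => ne_of_mem_of_not_mem hi ha
    by_cases hfit : T ≤ l a + ∑ i ∈ B, v i
    · obtain ⟨w, k, hwb, hwsum, hwext⟩ := ih (fun i hi => hlv i (mem_insert_of_mem hi))
        (T - l a) (by linarith) (by linarith)
      refine ⟨Function.update w a (l a), k, ?_, ?_, ?_⟩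
      · simp only [mem_insert, forall_eq_or_imp, Function.update_self]
        exact ⟨⟨le_rfl, hlv a (mem_insert_self a B)⟩,
          fun i hi => by simpa [Function.update_of_ne (hne i hi)] using hwb i hi⟩
      · rw [sum_insert ha, Function.update_self, sum_update_of_notMem ha, hwsum]
        ring
      · simp only [mem_insert, forall_eq_or_imp, Function.update_self, true_or, implies_true,
          true_and]
        exact fun i hi hik => by simpa [Function.update_of_ne (hne i hi)] using hwext i hi hik
    · refine ⟨Function.update v a (T - ∑ i ∈ B, v i), a, ?_, ?_, ?_⟩
      · simp only [mem_insert, forall_eq_or_imp, Function.update_self]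
        exact ⟨⟨by linarith, by linarith⟩,
          fun i hi => by
            simpa [Function.update_of_ne (hne i hi)] using hlv i (mem_insert_of_mem hi)⟩
      · rw [sum_insert ha, Function.update_self, sum_update_of_notMem ha]
        ring
      · simp only [mem_insert, forall_eq_or_imp, ne_eq, not_true_eq_false, false_implies,
          true_and]
        exact fun i hi _ => Or.inr (Function.update_of_ne (hne i hi) _ _)

variable {m n : ℕ}

lemma exists_isPlan {s : Fin m → ℝ} {d : Fin n → ℝ} (hs : ∀ i, 0 ≤ s i) (hd : ∀ j, 0 ≤ d j)
    (hsd : ∑ j, d j ≤ ∑ i, s i) : ∃ x, IsPlan s d x := by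
  set S := ∑ i, s i
  have hS : 0 ≤ S := sum_nonneg fun i _ => hs i
  refine ⟨fun i j => s i * d j / S, fun i j => by have := hs i; have := hd j; positivity,
    fun i => ?_, fun j => ?_⟩
  · rw [← sum_div, ← mul_sum]
    rcases hS.eq_or_lt with hS0 | hSpos
    · simpa [← hS0] using hs i
    · rw [div_le_iff₀ hSpos]
      exact mul_le_mul_of_nonneg_left hsd (hs i)
  · rw [← sum_div, ← sum_mul]
    rcases hS.eq_or_lt with hS0 | hSpos
    · have hd0 : ∑ j, d j = 0 := le_antisymm (hS0 ▸ hsd) (sum_nonneg fun j _ => hd j)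
      simp [← hS0, ((sum_eq_zero_iff_of_nonneg fun j _ => hd j).mp hd0 j (mem_univ j))]
    · field_simp
      exact mul_comm _ _

lemma IsPlan.exists_le_of_le {s s' : Fin m → ℝ} {d d' : Fin n → ℝ} {x' : Fin m → Fin n → ℝ}
    (hx' : IsPlan s' d' x') (hs : ∀ i, s' i ≤ s i) (hd0 : ∀ j, 0 ≤ d j)
    (hd : ∀ j, d j ≤ d' j) : ∃ x, IsPlan s d x ∧ ∀ i j, x i j ≤ x' i j := by
  obtain ⟨hx'0, hx'row, hx'col⟩ := hx'
  set r : Fin n → ℝ := fun j => d j / d' j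
  have hr0 : ∀ j, 0 ≤ r j := fun j => div_nonneg (hd0 j) ((hd0 j).trans (hd j))
  have hr1 : ∀ j, r j ≤ 1 := fun j => div_le_one_of_le₀ (hd j) ((hd0 j).trans (hd j))
  have hrd : ∀ j, r j * d' j = d j := fun j =>
    div_mul_cancel_of_imp fun h => le_antisymm (h ▸ hd j) (hd0 j)
  have hle : ∀ i j, r j * x' i j ≤ x' i j := fun i j =>
    mul_le_of_le_one_left (hx'0 i j) (hr1 j)
  refine ⟨fun i j => r j * x' i j, ⟨fun i j => mul_nonneg (hr0 j) (hx'0 i j), fun i => ?_,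
    fun j => by rw [← mul_sum, hx'col j, hrd j]⟩, hle⟩
  calc ∑ j, r j * x' i j ≤ ∑ j, x' i j := sum_le_sum fun j _ => hle i j
    _ ≤ s i := (hx'row i).trans (hs i)

lemma cost_nonneg {C x : Fin m → Fin n → ℝ} (hC : ∀ i j, 0 ≤ C i j) (hx : ∀ i j, 0 ≤ x i j) :
    0 ≤ cost C x :=
  sum_nonneg fun i _ => sum_nonneg fun j _ => mul_nonneg (hC i j) (hx i j)

lemma cost_le_cost {C x x' : Fin m → Fin n → ℝ} (hC : ∀ i j, 0 ≤ C i j)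
    (hxx' : ∀ i j, x i j ≤ x' i j) : cost C x ≤ cost C x' :=
  sum_le_sum fun i _ => sum_le_sum fun j _ => mul_le_mul_of_nonneg_left (hxx' i j) (hC i j)

lemma optVal_le_optVal {C : Fin m → Fin n → ℝ} (hC : ∀ i j, 0 ≤ C i j)
    {s s' : Fin m → ℝ} {d d' : Fin n → ℝ} (hs : ∀ i, s' i ≤ s i) (hd0 : ∀ j, 0 ≤ d j)
    (hd : ∀ j, d j ≤ d' j) (hfeas : ∃ x', IsPlan s' d' x') :
    optVal C s d ≤ optVal C s' d' := by
  obtain ⟨x'₀, hx'₀⟩ := hfeas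
  have hbdd : BddBelow (cost C '' {x | IsPlan s d x}) :=
    ⟨0, by rintro _ ⟨x, hx, rfl⟩; exact cost_nonneg hC hx.1⟩
  refine le_csInf ⟨_, x'₀, hx'₀, rfl⟩ ?_
  rintro _ ⟨x', hx', rfl⟩
  obtain ⟨x, hx, hxx'⟩ := hx'.exists_le_of_le hs hd0 hd
  exact csInf_le_of_le hbdd ⟨x, hx, rfl⟩ (cost_le_cost hC hxx')

lemma optVal_le_of_balanced {C : Fin m → Fin n → ℝ} (hC : ∀ i j, 0 ≤ C i j)
    {s s' : Fin m → ℝ} {d d' : Fin n → ℝ} (hs'0 : ∀ i, 0 ≤ s' i) (hs : ∀ i, s' i ≤ s i)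
    (hd0 : ∀ j, 0 ≤ d j) (hd : ∀ j, d j ≤ d' j) (hbal : ∑ i, s' i = ∑ j, d' j) :
    optVal C s d ≤ optVal C s' d' :=
  optVal_le_optVal hC hs hd0 hd
    (exists_isPlan hs'0 (fun j => (hd0 j).trans (hd j)) hbal.ge)

lemma exists_balanced_dominating_of_demand_le_lower_supply {C : Fin m → Fin n → ℝ}
    (hC : ∀ i j, 0 ≤ C i j) {sl su s : Fin m → ℝ} {dl du d : Fin n → ℝ}
    (hsl : ∀ i, 0 ≤ sl i) (hslsu : ∀ i, sl i ≤ su i) (hsls : ∀ i, sl i ≤ s i)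
    (hd0 : ∀ j, 0 ≤ d j) (hdb : ∀ j, dl j ≤ d j ∧ d j ≤ du j)
    (hqed : ∀ j, d j = dl j ∨ d j = du j) (hinfeas : ∑ i, sl i < ∑ j, du j)
    (hle : ∑ j, d j ≤ ∑ i, sl i) :
    ∃ (s' : Fin m → ℝ) (d' : Fin n → ℝ),
      (∀ i, sl i ≤ s' i ∧ s' i ≤ su i) ∧ (∀ j, dl j ≤ d' j ∧ d' j ≤ du j) ∧
      QuasiExtreme sl su s' dl du d' ∧ ∑ i, s' i = ∑ j, d' j ∧
      optVal C s d ≤ optVal C s' d' := by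
  obtain ⟨j₀, -, -⟩ := exists_lt_of_sum_lt (hle.trans_lt hinfeas)
  have : Nonempty (Fin n) := ⟨j₀⟩
  obtain ⟨d', kd, hd'b, hd'sum, hd'ext⟩ :=
    exists_sum_eq_of_le_of_le d du univ (fun j _ => (hdb j).2) _ hle hinfeas.le
  have hdd' : ∀ j, d j ≤ d' j := fun j => (hd'b j (mem_univ j)).1
  refine ⟨sl, d', fun i => ⟨le_rfl, hslsu i⟩,
    fun j => ⟨(hdb j).1.trans (hdd' j), (hd'b j (mem_univ j)).2⟩,
    Or.inr ⟨kd, fun j hj => ?_, fun i => Or.inl rfl⟩, hd'sum.symm,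
    optVal_le_of_balanced hC hsl hsls hd0 hdd' hd'sum.symm⟩
  rcases hd'ext j (mem_univ j) hj with h | h
  · exact h ▸ hqed j
  · exact Or.inr h

lemma exists_balanced_dominating_of_lower_supply_lt_demand {C : Fin m → Fin n → ℝ}
    (hC : ∀ i j, 0 ≤ C i j) {sl su s : Fin m → ℝ} {dl du d : Fin n → ℝ} (k : Fin m)
    (hsl : ∀ i, 0 ≤ sl i) (hsb : ∀ i, sl i ≤ s i ∧ s i ≤ su i) (hd0 : ∀ j, 0 ≤ d j)
    (hdb : ∀ j, dl j ≤ d j ∧ d j ≤ du j) (hqe : ∀ i, i ≠ k → s i = sl i ∨ s i = su i)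
    (hqed : ∀ j, d j = dl j ∨ d j = du j) (hlt : ∑ i, sl i < ∑ j, d j)
    (hk : ∑ j, d j - ∑ i ∈ univ.erase k, s i < sl k) :
    ∃ (s' : Fin m → ℝ) (d' : Fin n → ℝ),
      (∀ i, sl i ≤ s' i ∧ s' i ≤ su i) ∧ (∀ j, dl j ≤ d' j ∧ d' j ≤ du j) ∧
      QuasiExtreme sl su s' dl du d' ∧ ∑ i, s' i = ∑ j, d' j ∧
      optVal C s d ≤ optVal C s' d' := by
  have : Nonempty (Fin m) := ⟨k⟩
  set sv := Function.update s k (sl k)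
  have hsv : ∀ i, sl i ≤ sv i ∧ sv i ≤ s i ∧ (sv i = sl i ∨ sv i = su i) := by
    intro i
    rcases eq_or_ne i k with rfl | hik
    · simpa [sv] using (hsb i).1
    · simpa [sv, Function.update_of_ne hik] using ⟨(hsb i).1, hqe i hik⟩
  have hdsv : ∑ j, d j ≤ ∑ i, sv i := by
    rw [sum_update_of_mem (mem_univ k), sdiff_singleton_eq_erase]
    linarith
  obtain ⟨s', ks, hs'b, hs'sum, hs'ext⟩ :=
    exists_sum_eq_of_le_of_le sl sv univ (fun i _ => (hsv i).1) _ hlt.le hdsv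
  have hs's : ∀ i, s' i ≤ s i := fun i => (hs'b i (mem_univ i)).2.trans (hsv i).2.1
  refine ⟨s', d, fun i => ⟨(hs'b i (mem_univ i)).1, (hs's i).trans (hsb i).2⟩, hdb,
    Or.inl ⟨ks, fun i hi => ?_, hqed⟩, hs'sum,
    optVal_le_of_balanced hC (fun i => (hsl i).trans (hs'b i (mem_univ i)).1) hs's hd0
      (fun _ => le_rfl) hs'sum⟩
  rcases hs'ext i (mem_univ i) hi with h | h
  · exact Or.inl h
  · exact h ▸ (hsv i).2.2

theorem balanced_dominates_supply_case_general {m n : ℕ} (Cb : Fin m → Fin n → ℝ)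
    (sl su s : Fin m → ℝ) (dl du d : Fin n → ℝ) (k : Fin m)
    (hCb : ∀ i j, 0 ≤ Cb i j)
    (hsl : ∀ i, 0 ≤ sl i) (hdl : ∀ j, 0 ≤ dl j)
    (hslsu : ∀ i, sl i ≤ su i)
    (hinfeas : ∑ i, sl i < ∑ j, du j)
    (hsb : ∀ i, sl i ≤ s i ∧ s i ≤ su i)
    (hdb : ∀ j, dl j ≤ d j ∧ d j ≤ du j)
    (hqe : ∀ i, i ≠ k → s i = sl i ∨ s i = su i)
    (hqed : ∀ j, d j = dl j ∨ d j = du j)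
    (hk : ∑ j, d j - ∑ i ∈ Finset.univ.erase k, s i < sl k) :
    ∃ (s' : Fin m → ℝ) (d' : Fin n → ℝ),
      (∀ i, sl i ≤ s' i ∧ s' i ≤ su i) ∧ (∀ j, dl j ≤ d' j ∧ d' j ≤ du j) ∧
      QuasiExtreme sl su s' dl du d' ∧ ∑ i, s' i = ∑ j, d' j ∧
      optVal Cb s d ≤ optVal Cb s' d' := by
  have hd0 : ∀ j, 0 ≤ d j := fun j => (hdl j).trans (hdb j).1
  rcases le_or_gt (∑ j, d j) (∑ i, sl i) with hle | hlt
  · exact exists_balanced_dominating_of_demand_le_lower_supply hCb hsl hslsu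
      (fun i => (hsb i).1) hd0 hdb hqed hinfeas hle
  · exact exists_balanced_dominating_of_lower_supply_lt_demand hCb k hsl hsb hd0 hdb hqe hqed
      hlt hk

/-- Theorem 3 (supply case): a feasible supply-quasi-extreme scenario whose free
supply cannot reach balance from below is dominated by a balanced feasible
quasi-extreme scenario. -/
theorem balanced_dominates_supply_case {m n : ℕ} (Cb : Fin m → Fin n → ℝ)
    (sl su s : Fin m → ℝ) (dl du d : Fin n → ℝ) (k : Fin m)
    (hCb : ∀ i j, 0 ≤ Cb i j)
    (hsl : ∀ i, 0 ≤ sl i) (hdl : ∀ j, 0 ≤ dl j)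
    (hslsu : ∀ i, sl i ≤ su i) (hdldu : ∀ j, dl j ≤ du j)
    (hinfeas : ∑ i, sl i < ∑ j, du j)
    (hsb : ∀ i, sl i ≤ s i ∧ s i ≤ su i)
    (hdb : ∀ j, dl j ≤ d j ∧ d j ≤ du j)
    (hqe : ∀ i, i ≠ k → s i = sl i ∨ s i = su i)
    (hqed : ∀ j, d j = dl j ∨ d j = du j)
    (hfeas : ∑ j, d j ≤ ∑ i, s i)
    (hk : ∑ j, d j - ∑ i ∈ Finset.univ.erase k, s i < sl k) :
    ∃ (s' : Fin m → ℝ) (d' : Fin n → ℝ),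
      (∀ i, sl i ≤ s' i ∧ s' i ≤ su i) ∧ (∀ j, dl j ≤ d' j ∧ d' j ≤ du j) ∧
      QuasiExtreme sl su s' dl du d' ∧ ∑ i, s' i = ∑ j, d' j ∧
      optVal Cb s d ≤ optVal Cb s' d' :=
  balanced_dominates_supply_case_general Cb sl su s dl du d k hCb hsl hdl hslsu hinfeas hsb hdb hqe
    hqed hk
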